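/- arXiv:2502.06235 — 8 statements merged into one kernel-verified Lean document; each statement's English description precedes it below -/
import Mathlib

section
/- Let D be a convex cone in a real linear space and I a linear subspace. Then posi(D ∪ I) = I ∪ (D + I), and the assessment combining background (cone C₊ ∪ I, −C₊) with (D ∪ {0}, −D) is deductively closable if and only if D ∩ I = ∅, equivalently 0 ∉ D + I. -/
open Pointwise

variable {V : Type*} [AddCommGroup V] [Module ℝ V]

/-- The set of strictly positive scalar multiples of elements of `S`. -/
def Shull (S : Set V) : Set V := {x | ∃ l : ℝ, 0 < l ∧ ∃ u ∈ S, x = l • u}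

/-- A convex cone: closed under addition and strictly positive scalar multiplication. -/
def IsConvexCone (C : Set V) : Prop :=
  (∀ x ∈ C, ∀ y ∈ C, x + y ∈ C) ∧ ∀ l : ℝ, 0 < l → ∀ x ∈ C, l • x ∈ C

/-- The smallest convex cone containing `S`. -/
def Posi (S : Set V) : Set V := ⋂₀ {C : Set V | IsConvexCone C ∧ S ⊆ C}

/-- A statement model: axioms M1–M4. -/
def IsStatementModel (Ma Mr : Set V) : Prop :=
  (0 : V) ∈ Ma ∧ (0 : V) ∉ Mr ∧ IsConvexCone Ma ∧ Shull Mr - Ma ⊆ Mr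

/-- A linear subspace, as a subset. -/
def IsLinSubspace (I : Set V) : Prop :=
  (0 : V) ∈ I ∧ (∀ x ∈ I, ∀ y ∈ I, x + y ∈ I) ∧ ∀ c : ℝ, ∀ x ∈ I, c • x ∈ I

/-- `posi(D ∪ I) = I ∪ (D + I)`, and the combined assessment of background `(C ∪ I, −C)`
with `(D ∪ {0}, −D)` is deductively closable iff `D ∩ I = ∅`, equivalently `0 ∉ D + I`. -/
theorem stmt4 (C D I : Set V) (hD : IsConvexCone D) (hC : C ⊆ D) (hI : IsLinSubspace I) :
    Posi (D ∪ I) = I ∪ (D + I) ∧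
    (Posi ((C ∪ I) ∪ (D ∪ {0})) ∩ ((-C) ∪ (-D)) = ∅ ↔ D ∩ I = ∅) ∧
    (D ∩ I = ∅ ↔ (0 : V) ∉ D + I) := by
  have hIneg : ∀ x ∈ I, -x ∈ I := by
    intro x hx
    have := hI.2.2 (-1) x hx
    simpa using this
  -- I ∪ (D + I) is a convex cone
  have hcone : IsConvexCone (I ∪ (D + I)) := by
    constructor
    · rintro x (hx | hx) y (hy | hy)
      · exact Or.inl (hI.2.1 x hx y hy)
      · obtain ⟨d, hd, i, hi, rfl⟩ := Set.mem_add.mp hy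
        exact Or.inr (Set.mem_add.mpr ⟨d, hd, x + i, hI.2.1 x hx i hi, by abel⟩)
      · obtain ⟨d, hd, i, hi, rfl⟩ := Set.mem_add.mp hx
        exact Or.inr (Set.mem_add.mpr ⟨d, hd, i + y, hI.2.1 i hi y hy, by abel⟩)
      · obtain ⟨d, hd, i, hi, rfl⟩ := Set.mem_add.mp hx
        obtain ⟨d', hd', i', hi', rfl⟩ := Set.mem_add.mp hy
        exact Or.inr (Set.mem_add.mpr ⟨d + d', hD.1 d hd d' hd', i + i',
          hI.2.1 i hi i' hi', by abel⟩)
    · rintro l hl x (hx | hx)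
      · exact Or.inl (hI.2.2 l x hx)
      · obtain ⟨d, hd, i, hi, rfl⟩ := Set.mem_add.mp hx
        exact Or.inr (Set.mem_add.mpr ⟨l • d, hD.2 l hl d hd, l • i, hI.2.2 l i hi,
          by rw [smul_add]⟩)
  have hsub : D ∪ I ⊆ I ∪ (D + I) := by
    rintro x (hx | hx)
    · exact Or.inr (Set.mem_add.mpr ⟨x, hx, 0, hI.1, by simp⟩)
    · exact Or.inl hx
  have hposi : Posi (D ∪ I) = I ∪ (D + I) := by
    apply subset_antisymm
    · exact Set.sInter_subset_of_mem ⟨hcone, hsub⟩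
    · rintro x (hx | hx) Cc hCc
      · exact hCc.2 (Or.inr hx)
      · obtain ⟨d, hd, i, hi, rfl⟩ := Set.mem_add.mp hx
        exact hCc.1.1 d (hCc.2 (Or.inl hd)) i (hCc.2 (Or.inr hi))
  have hsets : (C ∪ I) ∪ (D ∪ {0}) = D ∪ I := by
    apply subset_antisymm
    · rintro x ((hx | hx) | (hx | hx))
      · exact Or.inl (hC hx)
      · exact Or.inr hx
      · exact Or.inl hx
      · simp only [Set.mem_singleton_iff] at hx
        exact Or.inr (hx ▸ hI.1)
    · rintro x (hx | hx)
      · exact Or.inr (Or.inl hx)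
      · exact Or.inl (Or.inr hx)
  have h3 : D ∩ I = ∅ ↔ (0 : V) ∉ D + I := by
    constructor
    · intro h h0
      obtain ⟨d, hd, i, hi, hdi⟩ := Set.mem_add.mp h0
      have hdeq : d = -i := eq_neg_of_add_eq_zero_left hdi
      have : d ∈ D ∩ I := ⟨hd, hdeq ▸ hIneg i hi⟩
      rw [h] at this; exact this
    · intro h0
      ext x
      simp only [Set.mem_inter_iff, Set.mem_empty_iff_false, iff_false, not_and]
      intro hxD hxI
      exact h0 (Set.mem_add.mpr ⟨x, hxD, -x, hIneg x hxI, by simp⟩)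
  refine ⟨hposi, ?_, h3⟩
  rw [hsets, hposi]
  constructor
  · intro h
    by_contra hne
    obtain ⟨d, hdD, hdI⟩ := Set.nonempty_iff_ne_empty.mpr hne
    have : -d ∈ (I ∪ (D + I)) ∩ ((-C) ∪ (-D)) :=
      ⟨Or.inl (hIneg d hdI), Or.inr (Set.neg_mem_neg.mpr hdD)⟩
    rw [h] at this; exact this
  · intro h
    have h0 : (0 : V) ∉ D + I := h3.mp h
    ext x
    simp only [Set.mem_inter_iff, Set.mem_empty_iff_false, iff_false, not_and]
    rintro (hxI | hxDI) (hxC | hxD)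
    · have hxD : -x ∈ D := hC (Set.mem_neg.mp hxC)
      exact absurd (Set.eq_empty_iff_forall_notMem.mp h (-x) ⟨hxD, hIneg x hxI⟩) id
    · have hxD : -x ∈ D := Set.mem_neg.mp hxD
      exact absurd (Set.eq_empty_iff_forall_notMem.mp h (-x) ⟨hxD, hIneg x hxI⟩) id
    · have hxD : -x ∈ D := hC (Set.mem_neg.mp hxC)
      obtain ⟨d, hd, i, hi, rfl⟩ := Set.mem_add.mp hxDI
      exact h0 (Set.mem_add.mpr ⟨-(d + i) + d, hD.1 _ hxD d hd, i, hi, by abel⟩)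
    · have hxD : -x ∈ D := Set.mem_neg.mp hxD
      obtain ⟨d, hd, i, hi, rfl⟩ := Set.mem_add.mp hxDI
      exact h0 (Set.mem_add.mpr ⟨-(d + i) + d, hD.1 _ hxD d hd, i, hi, by abel⟩)
end

section
/- If D is a coherent set of desirable options (a convex cone with C₊ ⊆ D and 0 ∉ D) and I is a linear subspace with D ∩ I = ∅ and C₊ + I ⊆ C₊, then the least resolved statement model including (D ∪ I, −D) is ((D + I) ∪ I, −(D + I)), which is the DI model with desirable set D + I and indifferent set I. -/
open Pointwise

variable {V : Type*} [AddCommGroup V] [Module ℝ V]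

/-- A DI model: a statement model satisfying the Desirability-Indifference condition. -/
def IsDIModel (Ma Mr : Set V) : Prop :=
  IsStatementModel Ma Mr ∧ Mr ⊆ -Ma ∧ Ma = (Ma ∩ -Mr) ∪ (Ma ∩ -Ma)

/-- For a coherent set of desirable options `D` and an indifference subspace `I` with
`D ∩ I = ∅` and `C + I ⊆ C`, the least resolved statement model including `(D ∪ I, −D)` is
`((D + I) ∪ I, −(D + I))`, the DI model with desirable set `D + I` and indifferent set `I`. -/
theorem stmt5 (C D I : Set V) (hCcone : IsConvexCone C) (hC0 : (0 : V) ∉ C)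
    (hD : IsConvexCone D) (hCD : C ⊆ D) (hD0 : (0 : V) ∉ D)
    (hI : IsLinSubspace I) (hDI : D ∩ I = ∅) (hCI : C + I ⊆ C) :
    IsStatementModel ((D + I) ∪ I) (-(D + I)) ∧
    D ∪ I ⊆ (D + I) ∪ I ∧ (-D : Set V) ⊆ -(D + I) ∧
    (∀ Ma Mr : Set V, IsStatementModel Ma Mr → D ∪ I ⊆ Ma → (-D : Set V) ⊆ Mr →
      (D + I) ∪ I ⊆ Ma ∧ -(D + I) ⊆ Mr) ∧
    IsDIModel ((D + I) ∪ I) (-(D + I)) := by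
  obtain ⟨hI0, hIadd, hIsmul⟩ := hI
  obtain ⟨hDadd, hDsmul⟩ := hD
  -- membership in D + I
  have hmem : ∀ x : V, x ∈ D + I ↔ ∃ d ∈ D, ∃ i ∈ I, d + i = x := fun x => Set.mem_add
  have hIneg : ∀ i ∈ I, -i ∈ I := by
    intro i hi
    have := hIsmul (-1) i hi
    simpa using this
  -- 0 ∉ D + I
  have h0DI : (0 : V) ∉ D + I := by
    rintro h
    obtain ⟨d, hd, i, hi, hsum⟩ := (hmem 0).1 h
    have hdI : d ∈ I := by
      have : d = -i := by linear_combination (norm := abel) hsum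
      rw [this]; exact hIneg i hi
    have : d ∈ D ∩ I := ⟨hd, hdI⟩
    rw [hDI] at this; exact this
  -- D + I is a convex cone
  have hDIadd : ∀ x ∈ D + I, ∀ y ∈ D + I, x + y ∈ D + I := by
    intro x hx y hy
    obtain ⟨d, hd, i, hi, rfl⟩ := (hmem x).1 hx
    obtain ⟨d', hd', i', hi', rfl⟩ := (hmem y).1 hy
    exact (hmem _).2 ⟨d + d', hDadd d hd d' hd', i + i', hIadd i hi i' hi', by abel⟩
  have hDIsmul : ∀ l : ℝ, 0 < l → ∀ x ∈ D + I, l • x ∈ D + I := by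
    intro l hl x hx
    obtain ⟨d, hd, i, hi, rfl⟩ := (hmem x).1 hx
    exact (hmem _).2 ⟨l • d, hDsmul l hl d hd, l • i, hIsmul l i hi, by rw [smul_add]⟩
  -- D + I absorbs I
  have hDII : ∀ x ∈ D + I, ∀ i ∈ I, x + i ∈ D + I := by
    intro x hx i hi
    obtain ⟨d, hd, j, hj, rfl⟩ := (hmem x).1 hx
    exact (hmem _).2 ⟨d, hd, j + i, hIadd j hj i hi, by abel⟩
  have hDsub : D ⊆ D + I := by
    intro d hd
    exact (hmem d).2 ⟨d, hd, 0, hI0, by abel⟩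
  have hIsub : I ⊆ (D + I) ∪ I := fun i hi => Or.inr hi
  -- statement model
  have hSM : IsStatementModel ((D + I) ∪ I) (-(D + I)) := by
    refine ⟨Or.inr hI0, ?_, ⟨?_, ?_⟩, ?_⟩
    · intro h
      rw [Set.mem_neg, neg_zero] at h
      exact h0DI h
    · rintro x (hx | hx) y (hy | hy)
      · exact Or.inl (hDIadd x hx y hy)
      · exact Or.inl (hDII x hx y hy)
      · exact Or.inl (by rw [add_comm x y]; exact hDII y hy x hx)
      · exact Or.inr (hIadd x hx y hy)
    · rintro l hl x (hx | hx)
      · exact Or.inl (hDIsmul l hl x hx)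
      · exact Or.inr (hIsmul l x hx)
    · rintro x hx
      rw [Set.mem_sub] at hx
      obtain ⟨a, ha, b, hb, rfl⟩ := hx
      obtain ⟨l, hl, u, hu, rfl⟩ := ha
      rw [Set.mem_neg] at hu ⊢
      have hlu : l • (-u) ∈ D + I := hDIsmul l hl _ hu
      rcases hb with hb | hb
      · have : l • (-u) + b ∈ D + I := hDIadd _ hlu b hb
        have heq : -(l • u - b) = l • (-u) + b := by rw [smul_neg]; abel
        rw [heq]; exact this
      · have : l • (-u) + b ∈ D + I := hDII _ hlu b hb
        have heq : -(l • u - b) = l • (-u) + b := by rw [smul_neg]; abel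
        rw [heq]; exact this
  refine ⟨hSM, ?_, ?_, ?_, ?_⟩
  · rintro x (hx | hx)
    · exact Or.inl (hDsub hx)
    · exact Or.inr hx
  · intro x hx
    rw [Set.mem_neg] at hx ⊢
    exact hDsub hx
  · intro Ma Mr hM hDIa hDr
    obtain ⟨hM0, hMr0, ⟨hMadd, hMsmul⟩, hMsub⟩ := hM
    have hDIMa : D + I ⊆ Ma := by
      intro x hx
      obtain ⟨d, hd, i, hi, rfl⟩ := (hmem x).1 hx
      exact hMadd d (hDIa (Or.inl hd)) i (hDIa (Or.inr hi))
    constructor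
    · rintro x (hx | hx)
      · exact hDIMa hx
      · exact hDIa (Or.inr hx)
    · intro x hx
      rw [Set.mem_neg] at hx
      obtain ⟨d, hd, i, hi, hsum⟩ := (hmem (-x)).1 hx
      have hdMr : -d ∈ Mr := hDr (by rw [Set.mem_neg, neg_neg]; exact hd)
      have : -d - i ∈ Mr := hMsub (Set.sub_mem_sub ⟨1, one_pos, -d, hdMr, by rw [one_smul]⟩
        (hDIa (Or.inr hi)))
      have heq : x = -d - i := by linear_combination (norm := abel) hsum
      rw [heq]; exact this
  · refine ⟨hSM, ?_, ?_⟩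
    · intro x hx
      rw [Set.mem_neg] at hx ⊢
      exact Or.inl hx
    · ext x
      constructor
      · rintro (hx | hx)
        · exact Or.inl ⟨Or.inl hx, by rw [Set.mem_neg, Set.mem_neg, neg_neg]; exact hx⟩
        · refine Or.inr ⟨Or.inr hx, ?_⟩
          rw [Set.mem_neg]
          exact Or.inr (hIneg x hx)
      · rintro (⟨h, _⟩ | ⟨h, _⟩) <;> exact h
end

section
/- The event ordering defined by e₁ ⊑ e₂ iff for all options u, e₁ ∗ u = e₁ ∗ (e₂ ∗ u) = e₂ ∗ (e₁ ∗ u), is a partial order on the set of events (reflexive, antisymmetric, transitive), with bottom the null event 0_V and top the unit event 1_V. -/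
variable {V : Type*} [AddCommGroup V] [Module ℝ V]

/-- The event ordering: `e₁ ⊑ e₂` iff `e₁ ∗ u = e₁ ∗ (e₂ ∗ u) = e₂ ∗ (e₁ ∗ u)` for all `u`. -/
def EvLe (op : V → V → V) (e1 e2 : V) : Prop :=
  ∀ u, op e1 u = op e1 (op e2 u) ∧ op e1 u = op e2 (op e1 u)

/-- The event ordering is a partial order on the events, with bottom the null event `0`
and top the unit event `1_V`. -/
theorem stmt7 (E : Set V) (op : V → V → V) (oneV : V) (Cpos : Set V)
    (hE1 : ∀ e ∈ E, ∀ u w : V, ∀ l : ℝ, op e (u + l • w) = op e u + l • op e w)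
    (hE2 : ∀ e ∈ E, ∀ u : V, op e u = op e (op e u))
    (hE4 : oneV ∈ E ∧ (oneV ∈ Cpos ∨ oneV = 0) ∧ (∀ u : V, op oneV u = u) ∧
      ∀ e ∈ E, op e oneV = e)
    (hE5 : (0 : V) ∈ E ∧ ∀ u : V, op 0 u = 0) :
    (∀ e ∈ E, EvLe op e e) ∧
    (∀ e1 ∈ E, ∀ e2 ∈ E, EvLe op e1 e2 → EvLe op e2 e1 → e1 = e2) ∧
    (∀ e1 ∈ E, ∀ e2 ∈ E, ∀ e3 ∈ E, EvLe op e1 e2 → EvLe op e2 e3 → EvLe op e1 e3) ∧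
    (∀ e ∈ E, EvLe op 0 e ∧ EvLe op e oneV) := by
  obtain ⟨h1E, _, hone, honer⟩ := hE4
  obtain ⟨h0E, h0⟩ := hE5
  have hzero : ∀ e ∈ E, op e 0 = 0 := by
    intro e he
    have := hE1 e he 0 0 (-1)
    simpa using this
  refine ⟨?_, ?_, ?_, ?_⟩
  · intro e he u
    exact ⟨hE2 e he u, hE2 e he u⟩
  · intro e1 he1 e2 he2 h12 h21
    have a := (h12 oneV).1
    rw [honer e1 he1, honer e2 he2] at a
    have b := (h21 oneV).2
    rw [honer e2 he2] at b
    rw [a, ← b]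
  · intro e1 he1 e2 he2 e3 he3 h12 h23 u
    constructor
    · calc op e1 u = op e1 (op e2 u) := (h12 u).1
        _ = op e1 (op e2 (op e3 u)) := by rw [← (h23 u).1]
        _ = op e1 (op e3 u) := by rw [← (h12 (op e3 u)).1]
    · calc op e1 u = op e2 (op e1 u) := (h12 u).2
        _ = op e3 (op e2 (op e1 u)) := (h23 (op e1 u)).2
        _ = op e3 (op e1 u) := by rw [← (h12 u).2]
  · intro e he
    refine ⟨fun u => ⟨by rw [h0, h0], by rw [h0, hzero e he]⟩,
      fun u => ⟨by rw [hone], by rw [hone]⟩⟩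
end

section
/- For a coherent set of desirable options D and an event e, the conditional set D⌋e := {u : e ∗ u ∈ D} satisfies D⌋e + ker(e) = D⌋e, where ker(e) = {u : e ∗ u = 0}; consequently posi(D⌋e ∪ ker(e)) = D⌋e ∪ ker(e), and if D⌋e ∩ ker(e) = ∅ then the assessment (D⌋e ∪ ker(e), −D⌋e) is a closed statement model (a DI model with desirable set D⌋e and indifferent set ker(e)). -/
open Pointwise

variable {V : Type*} [AddCommGroup V] [Module ℝ V]

/-- The kernel of the calling-off operation of event `e`. -/
def kerE (op : V → V → V) (e : V) : Set V := {u : V | op e u = 0}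

/-- The conditional (updated) set of desirable options. -/
def condD (op : V → V → V) (D : Set V) (e : V) : Set V := {u : V | op e u ∈ D}

/-- Accept part of the expansion (closure of the union): intersection of the accept parts
of all statement models including the assessment; equals `univ` (top) if there is none. -/
def ExpAcc (Aa Ar : Set V) : Set V :=
  ⋂₀ {Ma : Set V | ∃ Mr, IsStatementModel Ma Mr ∧ Aa ⊆ Ma ∧ Ar ⊆ Mr}

/-- Reject part of the expansion (closure of the union). -/
def ExpRej (Aa Ar : Set V) : Set V :=
  ⋂₀ {Mr : Set V | ∃ Ma, IsStatementModel Ma Mr ∧ Aa ⊆ Ma ∧ Ar ⊆ Mr}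

/-- `D⌋e + ker e = D⌋e`, hence `posi(D⌋e ∪ ker e) = D⌋e ∪ ker e`, and if
`D⌋e ∩ ker e = ∅` then `(D⌋e ∪ ker e, −D⌋e)` is a (closed) statement model which is a
DI model with desirable set `D⌋e` and indifferent set `ker e`. -/
theorem stmt13 (E : Set V) (op : V → V → V) (D : Set V)
    (hD : IsConvexCone D) (hD0 : (0 : V) ∉ D)
    (hE1 : ∀ e ∈ E, ∀ u w : V, ∀ l : ℝ, op e (u + l • w) = op e u + l • op e w)
    (hE2 : ∀ e ∈ E, ∀ u : V, op e u = op e (op e u))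
    (e : V) (he : e ∈ E) :
    condD op D e + kerE op e = condD op D e ∧
    Posi (condD op D e ∪ kerE op e) = condD op D e ∪ kerE op e ∧
    (condD op D e ∩ kerE op e = ∅ →
      IsStatementModel (condD op D e ∪ kerE op e) (-(condD op D e)) ∧
      IsDIModel (condD op D e ∪ kerE op e) (-(condD op D e))) := by
  have h0 : op e 0 = 0 := by
    have h := hE1 e he 0 0 1
    simp only [one_smul, add_zero] at h
    exact add_eq_left.mp h.symm
  have hadd : ∀ u w : V, op e (u + w) = op e u + op e w := by
    intro u w
    have h := hE1 e he u w 1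
    simpa using h
  have hsmul : ∀ (l : ℝ) (w : V), op e (l • w) = l • op e w := by
    intro l w
    have h := hE1 e he 0 w l
    simpa [h0] using h
  have hCadd : ∀ x ∈ condD op D e, ∀ y ∈ condD op D e, x + y ∈ condD op D e := by
    intro x hx y hy
    show op e (x + y) ∈ D
    rw [hadd]; exact hD.1 _ hx _ hy
  have hCsmul : ∀ l : ℝ, 0 < l → ∀ x ∈ condD op D e, l • x ∈ condD op D e := by
    intro l hl x hx
    show op e (l • x) ∈ D
    rw [hsmul]; exact hD.2 l hl _ hx
  have hCK : ∀ x ∈ condD op D e, ∀ k ∈ kerE op e, x + k ∈ condD op D e := by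
    intro x hx k hk
    show op e (x + k) ∈ D
    rw [hadd, hk, add_zero]; exact hx
  have h0K : (0 : V) ∈ kerE op e := h0
  have hKsmul : ∀ (l : ℝ), ∀ k ∈ kerE op e, l • k ∈ kerE op e := by
    intro l k hk
    show op e (l • k) = 0
    rw [hsmul, hk, smul_zero]
  have hKadd : ∀ k ∈ kerE op e, ∀ m ∈ kerE op e, k + m ∈ kerE op e := by
    intro k hk m hm
    show op e (k + m) = 0
    rw [hadd, hk, hm, add_zero]
  have part1 : condD op D e + kerE op e = condD op D e := by
    ext z
    constructor
    · rintro ⟨x, hx, k, hk, rfl⟩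
      exact hCK x hx k hk
    · intro hz
      exact ⟨z, hz, 0, h0K, add_zero z⟩
  have hcone : IsConvexCone (condD op D e ∪ kerE op e) := by
    constructor
    · rintro x (hx | hx) y (hy | hy)
      · exact Or.inl (hCadd x hx y hy)
      · exact Or.inl (hCK x hx y hy)
      · exact Or.inl (by rw [add_comm]; exact hCK y hy x hx)
      · exact Or.inr (hKadd x hx y hy)
    · rintro l hl x (hx | hx)
      · exact Or.inl (hCsmul l hl x hx)
      · exact Or.inr (hKsmul l x hx)
  have part2 : Posi (condD op D e ∪ kerE op e) = condD op D e ∪ kerE op e := by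
    apply subset_antisymm
    · exact Set.sInter_subset_of_mem ⟨hcone, subset_rfl⟩
    · exact Set.subset_sInter fun Cset hCset => hCset.2
  refine ⟨part1, part2, fun hdisj => ?_⟩
  have h0notC : (0 : V) ∉ condD op D e := by
    intro h
    have : op e 0 ∈ D := h
    rw [h0] at this
    exact hD0 this
  have hsm : IsStatementModel (condD op D e ∪ kerE op e) (-(condD op D e)) := by
    refine ⟨Or.inr h0K, ?_, hcone, ?_⟩
    · intro h
      rw [Set.mem_neg, neg_zero] at h
      exact h0notC h
    · rintro z hz
      rw [Set.mem_sub] at hz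
      obtain ⟨a, ha, b, hb, rfl⟩ := hz
      obtain ⟨l, hl, u, hu, rfl⟩ := ha
      rw [Set.mem_neg] at hu ⊢
      have h1 : l • (-u) ∈ condD op D e := hCsmul l hl _ hu
      have h2 : l • (-u) + b ∈ condD op D e := by
        rcases hb with hb | hb
        · exact hCadd _ h1 _ hb
        · exact hCK _ h1 _ hb
      have heq : -(l • u - b) = l • (-u) + b := by
        rw [smul_neg]; abel
      rw [heq]; exact h2
  refine ⟨hsm, hsm, ?_, ?_⟩
  · intro x hx
    rw [Set.mem_neg] at hx ⊢
    exact Or.inl hx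
  · apply subset_antisymm
    · rintro x (hx | hx)
      · left
        refine ⟨Or.inl hx, ?_⟩
        rw [Set.mem_neg, Set.mem_neg, neg_neg]
        exact hx
      · right
        refine ⟨Or.inr hx, ?_⟩
        rw [Set.mem_neg]
        refine Or.inr ?_
        show op e (-x) = 0
        rw [show (-x : V) = (-1 : ℝ) • x from (neg_one_smul ℝ x).symm, hsmul, hx, smul_zero]
    · rintro x (⟨hx, -⟩ | ⟨hx, -⟩) <;> exact hx
end

section
/- The revision operator rev(M | M_e) := (D⌋e ∪ ker(e), −D⌋e), restricted to DI models M = (D ∪ {0}, −D) with D coherent and event models M_e = (ker(e), ∅), satisfies the AGM-style inclusion axioms BR2 (M_e ⊆ rev(M | M_e)) and BR3 (rev(M | M_e) ⊆ exp(M | M_e)), where expansion is closure of the union. -/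
open Pointwise

variable {V : Type*} [AddCommGroup V] [Module ℝ V]

/-- The revision operator `rev(M | M_e) = (D⌋e ∪ ker e, −D⌋e)` satisfies AGM axioms
BR2 (`M_e ⊆ rev(M | M_e)`) and BR3 (`rev(M | M_e) ⊆ exp(M | M_e)`). -/
theorem stmt15 (E : Set V) (op : V → V → V) (oneV : V) (Cpos : Set V)
(hE1 : ∀ e ∈ E, ∀ u w : V, ∀ l : ℝ, op e (u + l • w) = op e u + l • op e w)
    (hE2 : ∀ e ∈ E, ∀ u : V, op e u = op e (op e u))
    (hE3 : ∀ e ∈ E, ∀ u : V, (u ∈ Cpos ∨ u = 0) → (op e u ∈ Cpos ∨ op e u = 0))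
    (hE4 : oneV ∈ E ∧ (oneV ∈ Cpos ∨ oneV = 0) ∧ (∀ u : V, op oneV u = u) ∧
      ∀ e ∈ E, op e oneV = e)
    (hE5 : (0 : V) ∈ E ∧ ∀ u : V, op 0 u = 0)
    (hE7 : ∀ e1 ∈ E, ∀ e2 ∈ E, (∀ u : V, op e2 u = 0 → op e1 u ∉ Cpos) → EvLe op e1 e2)
    (hE6 : ∀ u : V, ∃ a : ℝ, u + a • oneV ∈ Cpos ∨ u + a • oneV = 0)
    (hE8 : ∀ e ∈ E, ∃ ne ∈ E, e + ne ∈ E ∧ (∀ u : V, op (e + ne) u = u) ∧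
      ∀ u : V, op ne (op e u) = 0)
    (D : Set V) (hD : IsConvexCone D) (hD0 : (0 : V) ∉ D) (hCD : Cpos ⊆ D)
    (e : V) (he : e ∈ E) :
    (kerE op e ⊆ condD op D e ∪ kerE op e ∧ (∅ : Set V) ⊆ -(condD op D e)) ∧
    (condD op D e ∪ kerE op e ⊆ ExpAcc ((D ∪ {0}) ∪ kerE op e) ((-D) ∪ (∅ : Set V)) ∧
      -(condD op D e) ⊆ ExpRej ((D ∪ {0}) ∪ kerE op e) ((-D) ∪ (∅ : Set V))) := by

  have hlin := hE1 e he
  have hE2e := hE2 e he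
  have hker : ∀ u : V, op e (u - op e u) = 0 := by
    intro u
    have h := hlin u (op e u) (-1)
    rw [← hE2e u] at h
    simpa [sub_eq_add_neg] using h
  have hker' : ∀ u : V, op e (op e u - u) = 0 := by
    intro u
    have h := hlin (op e u) u (-1)
    rw [← hE2e u] at h
    simpa [sub_eq_add_neg] using h
  refine ⟨⟨fun u hu => Or.inr hu, by simp⟩, ?_, ?_⟩
  · intro u hu Ma hMa
    obtain ⟨Mr, hSM, hA, _⟩ := hMa
    have hkerMa : kerE op e ⊆ Ma := fun w hw => hA (Or.inr hw)
    rcases hu with hu | hu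
    · have h1 : op e u ∈ Ma := hA (Or.inl (Or.inl hu))
      have h2 : u - op e u ∈ Ma := hkerMa (hker u)
      have := hSM.2.2.1.1 _ h1 _ h2
      simpa using this
    · exact hkerMa hu
  · intro u hu Mr hMr
    obtain ⟨Ma, hSM, hA, hR⟩ := hMr
    have hd : op e (-u) ∈ D := hu
    have hneg : op e (-u) = -op e u := by
      have h := hlin 0 u (-1)
      have h0 : op e (0 : V) = 0 := by
        have h2 := hlin 0 0 (-1)
        have : op e (0 : V) = op e 0 + (-1) • op e 0 := by simpa using h2
        simpa using this
      rw [h0] at h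
      simpa using h
    have hmr : op e u ∈ Mr := by
      apply hR
      left
      rw [Set.mem_neg, ← hneg]
      exact hd
    have hshull : op e u ∈ Shull Mr := ⟨1, one_pos, op e u, hmr, (one_smul ℝ _).symm⟩
    have hma : op e u - u ∈ Ma := hA (Or.inr (hker' u))
    exact hSM.2.2.2 ⟨op e u, hshull, op e u - u, hma, by module⟩
end

section
/- Under the event axioms, if the revised model rev(M | M_{e₁}) = (D⌋e₁ ∪ ker(e₁), −D⌋e₁) is consistent with M_{e₂} = (ker(e₂), ∅), i.e., D⌋e₁ ∩ ker(e₂) = ∅, then e₁ ⊑ e₂, hence ker(e₂) ⊆ ker(e₁), M_{e₂} ⊆ M_{e₁}, and therefore rev(M | M_{e₁} ∪ M_{e₂}) = rev(M | M_{e₁}) = exp(rev(M | M_{e₁}) | M_{e₂}) (AGM axioms BR7 and BR8 hold). -/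
open Pointwise

variable {V : Type*} [AddCommGroup V] [Module ℝ V]

/-- If `rev(M | M_{e₁})` is consistent with `M_{e₂}`, i.e. `D⌋e₁ ∩ ker e₂ = ∅`, then
`e₁ ⊑ e₂`, `ker e₂ ⊆ ker e₁`, `M_{e₂} ⊆ M_{e₁}`, and the AGM axioms BR7 and BR8 hold:
`rev(M | M_{e₁} ∪ M_{e₂}) = rev(M | M_{e₁}) = exp(rev(M | M_{e₁}) | M_{e₂})`. -/
theorem stmt16 (E : Set V) (op : V → V → V) (oneV : V) (Cpos : Set V)
(hE1 : ∀ e ∈ E, ∀ u w : V, ∀ l : ℝ, op e (u + l • w) = op e u + l • op e w)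
    (hE2 : ∀ e ∈ E, ∀ u : V, op e u = op e (op e u))
    (hE3 : ∀ e ∈ E, ∀ u : V, (u ∈ Cpos ∨ u = 0) → (op e u ∈ Cpos ∨ op e u = 0))
    (hE4 : oneV ∈ E ∧ (oneV ∈ Cpos ∨ oneV = 0) ∧ (∀ u : V, op oneV u = u) ∧
      ∀ e ∈ E, op e oneV = e)
    (hE5 : (0 : V) ∈ E ∧ ∀ u : V, op 0 u = 0)
    (hE7 : ∀ e1 ∈ E, ∀ e2 ∈ E, (∀ u : V, op e2 u = 0 → op e1 u ∉ Cpos) → EvLe op e1 e2)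
    (hE6 : ∀ u : V, ∃ a : ℝ, u + a • oneV ∈ Cpos ∨ u + a • oneV = 0)
    (hE8 : ∀ e ∈ E, ∃ ne ∈ E, e + ne ∈ E ∧ (∀ u : V, op (e + ne) u = u) ∧
      ∀ u : V, op ne (op e u) = 0)
    (D : Set V) (hD : IsConvexCone D) (hD0 : (0 : V) ∉ D) (hCD : Cpos ⊆ D)
    (e1 : V) (he1 : e1 ∈ E) (e2 : V) (he2 : e2 ∈ E)
    (hcons : condD op D e1 ∩ kerE op e2 = ∅) :
    EvLe op e1 e2 ∧ kerE op e2 ⊆ kerE op e1 ∧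
    kerE op e1 ∪ kerE op e2 = kerE op e1 ∧
    (ExpAcc ((condD op D e1 ∪ kerE op e1) ∪ kerE op e2) ((-(condD op D e1)) ∪ (∅ : Set V)) =
        condD op D e1 ∪ kerE op e1 ∧
      ExpRej ((condD op D e1 ∪ kerE op e1) ∪ kerE op e2) ((-(condD op D e1)) ∪ (∅ : Set V)) =
        -(condD op D e1)) := by
  -- linearity facts for op e1
  have hz : op e1 0 = 0 := by
    have h := hE1 e1 he1 0 0 1
    simp at h
    exact h
  have hsmul : ∀ (l : ℝ) (w : V), op e1 (l • w) = l • op e1 w := by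
    intro l w
    have h := hE1 e1 he1 0 w l
    simpa [hz] using h
  have hadd : ∀ u v : V, op e1 (u + v) = op e1 u + op e1 v := by
    intro u v
    have h := hE1 e1 he1 u v 1
    simpa using h
  have hneg : ∀ u : V, op e1 (-u) = -op e1 u := by
    intro u
    have := hsmul (-1) u
    simpa using this
  -- EvLe
  have hle : EvLe op e1 e2 := by
    apply hE7 e1 he1 e2 he2
    intro u hu hpos
    have hmem : u ∈ condD op D e1 ∩ kerE op e2 := ⟨hCD hpos, hu⟩
    rw [hcons] at hmem
    exact hmem
  -- kernel inclusion
  have hker : kerE op e2 ⊆ kerE op e1 := by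
    intro u hu
    have h := (hle u).1
    simp only [kerE, Set.mem_setOf_eq] at hu ⊢
    rw [h, hu, hz]
  refine ⟨hle, hker, Set.union_eq_left.mpr hker, ?_⟩
  set A := condD op D e1 with hA
  set K := kerE op e1 with hK
  have hAa : (A ∪ K) ∪ kerE op e2 = A ∪ K :=
    Set.union_eq_left.mpr (hker.trans Set.subset_union_right)
  have hAr : (-A) ∪ (∅ : Set V) = -A := Set.union_empty _
  -- membership characterizations
  have hmemMa : ∀ u : V, u ∈ A ∪ K ↔ (op e1 u ∈ D ∨ op e1 u = 0) := by
    intro u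
    simp [hA, hK, condD, kerE, Set.mem_union]
  have hmemMr : ∀ u : V, u ∈ -A ↔ -op e1 u ∈ D := by
    intro u
    simp [hA, condD, Set.mem_neg, hneg]
  -- the revised model is a statement model
  have hsm : IsStatementModel (A ∪ K) (-A) := by
    refine ⟨(hmemMa 0).mpr (Or.inr hz), ?_, ?_, ?_⟩
    · intro h0
      have := (hmemMr 0).mp h0
      rw [hz, neg_zero] at this
      exact hD0 this
    · constructor
      · intro x hx y hy
        rw [hmemMa] at hx hy ⊢
        rw [hadd]
        rcases hx with hx | hx <;> rcases hy with hy | hy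
        · exact Or.inl (hD.1 _ hx _ hy)
        · rw [hy, add_zero]; exact Or.inl hx
        · rw [hx, zero_add]; exact Or.inl hy
        · rw [hx, hy, add_zero]; exact Or.inr rfl
      · intro l hl x hx
        rw [hmemMa] at hx ⊢
        rw [hsmul]
        rcases hx with hx | hx
        · exact Or.inl (hD.2 l hl _ hx)
        · rw [hx, smul_zero]; exact Or.inr rfl
    · intro x hx
      rw [Set.mem_sub] at hx
      obtain ⟨a, ha, b, hb, hab⟩ := hx
      obtain ⟨l, hl, u, hu, hu'⟩ := ha
      have hu2 : -op e1 u ∈ D := (hmemMr u).mp hu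
      have ha2 : -op e1 a ∈ D := by
        rw [hu', hsmul, ← smul_neg]
        exact hD.2 l hl _ hu2
      have hb2 := (hmemMa b).mp hb
      rw [hmemMr, ← hab]
      have : op e1 (a - b) = op e1 a - op e1 b := by
        rw [sub_eq_add_neg, hadd, hneg, ← sub_eq_add_neg]
      rw [this, neg_sub, sub_eq_add_neg]
      rcases hb2 with hb2 | hb2
      · exact hD.1 _ hb2 _ ha2
      · rw [hb2, zero_add]; exact ha2
  have hExpAcc : ExpAcc (A ∪ K) (-A) = A ∪ K := by
    apply subset_antisymm
    · intro x hx
      exact hx (A ∪ K) ⟨-A, hsm, subset_rfl, subset_rfl⟩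
    · intro x hx Ma hMa
      obtain ⟨Mr, _, hsub, _⟩ := hMa
      exact hsub hx
  have hExpRej : ExpRej (A ∪ K) (-A) = -A := by
    apply subset_antisymm
    · intro x hx
      exact hx (-A) ⟨A ∪ K, hsm, subset_rfl, subset_rfl⟩
    · intro x hx Mr hMr
      obtain ⟨Ma, _, _, hsub⟩ := hMr
      exact hsub hx
  rw [hAa, hAr]
  exact ⟨hExpAcc, hExpRej⟩
end

section
/- Levi's identity: for a DI model M = (D ∪ {0}, −D) with D coherent, and any event e, revising by M_e equals expanding the contraction by ¬M_e with M_e: rev(M | M_e) = exp(contr(M | ¬M_e) | M_e). The key step is that (D⌋e ∩ D) + ker(e) = D⌋e. -/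
open Pointwise

variable {V : Type*} [AddCommGroup V] [Module ℝ V]

/-- Levi's identity: `rev(M | M_e) = exp(contr(M | ¬M_e) | M_e)`, where
`contr(M | ¬M_e) = M ∩ rev(M | M_e)` componentwise; the key step is
`(D⌋e ∩ D) + ker e = D⌋e`. -/
theorem stmt17 (E : Set V) (op : V → V → V) (oneV : V) (Cpos : Set V)
(hE1 : ∀ e ∈ E, ∀ u w : V, ∀ l : ℝ, op e (u + l • w) = op e u + l • op e w)
    (hE2 : ∀ e ∈ E, ∀ u : V, op e u = op e (op e u))
    (hE3 : ∀ e ∈ E, ∀ u : V, (u ∈ Cpos ∨ u = 0) → (op e u ∈ Cpos ∨ op e u = 0))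
    (hE4 : oneV ∈ E ∧ (oneV ∈ Cpos ∨ oneV = 0) ∧ (∀ u : V, op oneV u = u) ∧
      ∀ e ∈ E, op e oneV = e)
    (hE5 : (0 : V) ∈ E ∧ ∀ u : V, op 0 u = 0)
    (hE7 : ∀ e1 ∈ E, ∀ e2 ∈ E, (∀ u : V, op e2 u = 0 → op e1 u ∉ Cpos) → EvLe op e1 e2)
    (hE6 : ∀ u : V, ∃ a : ℝ, u + a • oneV ∈ Cpos ∨ u + a • oneV = 0)
    (hE8 : ∀ e ∈ E, ∃ ne ∈ E, e + ne ∈ E ∧ (∀ u : V, op (e + ne) u = u) ∧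
      ∀ u : V, op ne (op e u) = 0)
    (D : Set V) (hD : IsConvexCone D) (hD0 : (0 : V) ∉ D) (hCD : Cpos ⊆ D)
    (e : V) (he : e ∈ E) :
    (condD op D e ∩ D) + kerE op e = condD op D e ∧
    ExpAcc (((D ∪ {0}) ∩ (condD op D e ∪ kerE op e)) ∪ kerE op e)
        (((-D) ∩ (-(condD op D e))) ∪ (∅ : Set V)) =
      condD op D e ∪ kerE op e ∧
    ExpRej (((D ∪ {0}) ∩ (condD op D e ∪ kerE op e)) ∪ kerE op e)
        (((-D) ∩ (-(condD op D e))) ∪ (∅ : Set V)) =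
      -(condD op D e) := by
  set De := condD op D e with hDedef
  set K := kerE op e with hKdef
  have lin := hE1 e he
  have hzero : op e 0 = 0 := by
    have h := lin 0 0 1
    simp only [smul_zero, add_zero, one_smul] at h
    exact left_eq_add.mp h
  have hadd : ∀ u w : V, op e (u + w) = op e u + op e w := by
    intro u w; have h := lin u w 1; simpa using h
  have hsmul : ∀ (l : ℝ) (w : V), op e (l • w) = l • op e w := by
    intro l w; have h := lin 0 w l; simpa [hzero] using h
  have hneg : ∀ w : V, op e (-w) = - op e w := by
    intro w
    have h := hsmul (-1) w
    simpa [neg_one_smul] using h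
  have hopsub : ∀ u w : V, op e (u - w) = op e u - op e w := by
    intro u w
    rw [sub_eq_add_neg, hadd, hneg, sub_eq_add_neg]
  have hidem := hE2 e he
  -- Part 1 : (D⌋e ∩ D) + ker e = D⌋e
  have part1 : (De ∩ D) + K = De := by
    apply Set.Subset.antisymm
    · intro x hx
      rw [Set.mem_add] at hx
      obtain ⟨a, ⟨haDe, haD⟩, b, hb, rfl⟩ := hx
      have hb' : op e b = 0 := hb
      show op e (a + b) ∈ D
      rw [hadd, hb', add_zero]
      exact haDe
    · intro u hu
      have hu' : op e u ∈ D := hu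
      rw [Set.mem_add]
      refine ⟨op e u, ⟨?_, hu'⟩, u - op e u, ?_, by abel⟩
      · show op e (op e u) ∈ D
        rw [← hidem]; exact hu'
      · show op e (u - op e u) = 0
        rw [hopsub, ← hidem, sub_self]
  -- the revision model is a statement model
  have hSMmodel : IsStatementModel (De ∪ K) (-De) := by
    refine ⟨Or.inr hzero, ?_, ⟨?_, ?_⟩, ?_⟩
    · intro h
      rw [Set.mem_neg, neg_zero] at h
      have h' : op e 0 ∈ D := h
      rw [hzero] at h'
      exact hD0 h'
    · rintro x (hx | hx) y (hy | hy)
      · exact Or.inl (show op e (x + y) ∈ D by rw [hadd]; exact hD.1 _ hx _ hy)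
      · exact Or.inl (show op e (x + y) ∈ D by
          rw [hadd, show op e y = 0 from hy, add_zero]; exact hx)
      · exact Or.inl (show op e (x + y) ∈ D by
          rw [hadd, show op e x = 0 from hx, zero_add]; exact hy)
      · exact Or.inr (show op e (x + y) = 0 by
          rw [hadd, show op e x = 0 from hx, show op e y = 0 from hy, add_zero])
    · rintro l hl x (hx | hx)
      · exact Or.inl (show op e (l • x) ∈ D by rw [hsmul]; exact hD.2 l hl _ hx)
      · exact Or.inr (show op e (l • x) = 0 by
          rw [hsmul, show op e x = 0 from hx, smul_zero])
    · intro x hx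
      rw [Set.mem_sub] at hx
      obtain ⟨a, ha, b, hb, rfl⟩ := hx
      obtain ⟨l, hl, u, hu, rfl⟩ := ha
      rw [Set.mem_neg] at hu ⊢
      show op e (-(l • u - b)) ∈ D
      have hu' : op e (-u) ∈ D := hu
      rw [hneg, hopsub, hsmul, neg_sub, sub_eq_add_neg, ← smul_neg, ← hneg u]
      rcases hb with hb | hb
      · exact hD.1 _ hb _ (hD.2 l hl _ hu')
      · rw [show op e b = 0 from hb, zero_add]
        exact hD.2 l hl _ hu'
  have hAa : (((D ∪ {0}) ∩ (De ∪ K)) ∪ K) ⊆ De ∪ K :=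
    Set.union_subset Set.inter_subset_right Set.subset_union_right
  have hAr : (((-D) ∩ (-De)) ∪ (∅ : Set V)) ⊆ -De :=
    Set.union_subset Set.inter_subset_right (Set.empty_subset _)
  -- every statement model containing the assessment contains the revision model
  have keyAcc : ∀ Ma Mr : Set V, IsStatementModel Ma Mr →
      (((D ∪ {0}) ∩ (De ∪ K)) ∪ K) ⊆ Ma → De ∪ K ⊆ Ma := by
    intro Ma Mr hM hsub x hx
    rcases hx with hx | hx
    · have hx' : op e x ∈ D := hx
      have h1 : op e x ∈ Ma := by
        refine hsub (Or.inl ⟨Or.inl hx', Or.inl ?_⟩)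
        show op e (op e x) ∈ D
        rw [← hidem]; exact hx'
      have h2 : x - op e x ∈ Ma := by
        refine hsub (Or.inr ?_)
        show op e (x - op e x) = 0
        rw [hopsub, ← hidem, sub_self]
      have h3 := hM.2.2.1.1 _ h1 _ h2
      have h4 : op e x + (x - op e x) = x := by abel
      rwa [h4] at h3
    · exact hsub (Or.inr hx)
  have keyRej : ∀ Ma Mr : Set V, IsStatementModel Ma Mr →
      (((D ∪ {0}) ∩ (De ∪ K)) ∪ K) ⊆ Ma →
      (((-D) ∩ (-De)) ∪ (∅ : Set V)) ⊆ Mr → -De ⊆ Mr := by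
    intro Ma Mr hM hsubA hsubR x hx
    rw [Set.mem_neg] at hx
    have hx' : op e (-x) ∈ D := hx
    have hopx : op e x ∈ Mr := by
      refine hsubR (Or.inl ⟨?_, ?_⟩)
      · rw [Set.mem_neg, ← hneg]; exact hx'
      · rw [Set.mem_neg]
        show op e (-(op e x)) ∈ D
        rw [hneg, ← hidem, ← hneg]; exact hx'
    have hker : op e x - x ∈ Ma := by
      refine hsubA (Or.inr ?_)
      show op e (op e x - x) = 0
      rw [hopsub, ← hidem, sub_self]
    apply hM.2.2.2
    rw [Set.mem_sub]
    exact ⟨op e x, ⟨1, one_pos, op e x, hopx, (one_smul ℝ (op e x)).symm⟩,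
      op e x - x, hker, by abel⟩
  refine ⟨part1, ?_, ?_⟩
  · apply Set.Subset.antisymm
    · exact Set.sInter_subset_of_mem ⟨-De, hSMmodel, hAa, hAr⟩
    · intro x hx
      rw [ExpAcc, Set.mem_sInter]
      rintro Ma ⟨Mr, hM, hA, _⟩
      exact keyAcc Ma Mr hM hA hx
  · apply Set.Subset.antisymm
    · exact Set.sInter_subset_of_mem ⟨De ∪ K, hSMmodel, hAa, hAr⟩
    · intro x hx
      rw [ExpRej, Set.mem_sInter]
      rintro Mr ⟨Ma, hM, hA, hR⟩
      exact keyRej Ma Mr hM hA hR hx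
end

section
/- In the quantum instance on a finite-dimensional complex Hilbert space, the ordering axiom E7 holds for orthogonal projections: if P₁, P₂ are orthogonal projections such that for every Hermitian operator A, P₂AP₂ = 0 implies P₁AP₁ is not positive semidefinite and nonzero, then range(P₁) ⊆ range(P₂), i.e., P₁P₂ = P₂P₁ = P₁. -/
/-- In the quantum instance, the ordering axiom E7 holds for orthogonal projections: if for
every Hermitian `A`, `P₂AP₂ = 0` implies `P₁AP₁` is not positive semidefinite and nonzero,
then `P₁P₂ = P₂P₁ = P₁`. -/
theorem stmt19 (X : Type*) [NormedAddCommGroup X] [InnerProductSpace ℂ X]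
    [FiniteDimensional ℂ X]
    (P1 P2 : X →ₗ[ℂ] X)
    (hP1s : P1.IsSymmetric) (hP1i : P1 ∘ₗ P1 = P1)
    (hP2s : P2.IsSymmetric) (hP2i : P2 ∘ₗ P2 = P2)
    (h : ∀ A : X →ₗ[ℂ] X, A.IsSymmetric → P2 ∘ₗ A ∘ₗ P2 = 0 →
      ¬((∀ x : X, 0 ≤ (inner ℂ ((P1 ∘ₗ A ∘ₗ P1) x) x : ℂ).re) ∧ P1 ∘ₗ A ∘ₗ P1 ≠ 0)) :
    P1 ∘ₗ P2 = P1 ∧ P2 ∘ₗ P1 = P1 := by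
  set A : X →ₗ[ℂ] X := LinearMap.id - P2 with hA
  have hAs : A.IsSymmetric := by
    intro x y
    simp only [hA, LinearMap.sub_apply, LinearMap.id_apply, inner_sub_left, inner_sub_right,
      hP2s x y]
  have hAi : A ∘ₗ A = A := by
    simp only [hA, LinearMap.comp_sub, LinearMap.sub_comp, LinearMap.id_comp,
      LinearMap.comp_id, hP2i]
    abel
  have hPAP : P2 ∘ₗ A ∘ₗ P2 = 0 := by
    simp only [hA, LinearMap.comp_sub, LinearMap.sub_comp, LinearMap.id_comp, hP2i,
      LinearMap.comp_assoc, sub_self, LinearMap.comp_zero, LinearMap.zero_comp]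
  have hkey : ∀ x : X, (inner ℂ ((P1 ∘ₗ A ∘ₗ P1) x) x : ℂ) = inner ℂ (A (P1 x)) (A (P1 x)) := by
    intro x
    have e1 : (inner ℂ ((P1 ∘ₗ A ∘ₗ P1) x) x : ℂ) = inner ℂ (A (P1 x)) (P1 x) := by
      simp only [LinearMap.comp_apply]
      exact hP1s _ _
    have hAA : ∀ y : X, A (A y) = A y := fun y => by
      simpa using LinearMap.congr_fun hAi y
    have e2 : (inner ℂ (A (P1 x)) (P1 x) : ℂ) = inner ℂ (A (P1 x)) (A (P1 x)) := by
      calc (inner ℂ (A (P1 x)) (P1 x) : ℂ) = inner ℂ (A (A (P1 x))) (P1 x) := by rw [hAA]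
        _ = inner ℂ (A (P1 x)) (A (P1 x)) := hAs _ _
    rw [e1, e2]
  have hpos : ∀ x : X, 0 ≤ (inner ℂ ((P1 ∘ₗ A ∘ₗ P1) x) x : ℂ).re := by
    intro x
    rw [hkey x]
    have := inner_self_nonneg (𝕜 := ℂ) (x := A (P1 x))
    simpa using this
  have hzero : P1 ∘ₗ A ∘ₗ P1 = 0 := by
    by_contra hne
    exact h A hAs hPAP ⟨hpos, hne⟩
  have hAP1 : ∀ x : X, A (P1 x) = 0 := by
    intro x
    have := (hkey x).symm
    rw [hzero] at this
    simp only [LinearMap.zero_apply, inner_zero_left] at this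
    exact inner_self_eq_zero.mp this
  have hP21 : P2 ∘ₗ P1 = P1 := by
    ext x
    simp only [LinearMap.comp_apply]
    have := hAP1 x
    simp only [hA, LinearMap.sub_apply, LinearMap.id_apply, sub_eq_zero] at this
    exact this.symm
  have hP12 : P1 ∘ₗ P2 = P1 := by
    ext x
    apply ext_inner_left ℂ
    intro v
    simp only [LinearMap.comp_apply]
    calc (inner ℂ v (P1 (P2 x)) : ℂ) = inner ℂ (P1 v) (P2 x) := (hP1s v (P2 x)).symm
      _ = inner ℂ (P2 (P1 v)) x := (hP2s (P1 v) x).symm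
      _ = inner ℂ (P1 v) x := by rw [show P2 (P1 v) = P1 v from by simpa using LinearMap.congr_fun hP21 v]
      _ = inner ℂ v (P1 x) := hP1s v x
  exact ⟨hP12, hP21⟩
end
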